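/- Let Q be a finite acyclic quiver with a source ω such that Q' = Q \ {ω} is connected, and suppose there is an arrow ω → p. Let X be an exceptional representation of Q' (extended by 0 at ω), Y = S(ω). Let M be a representation of Q with an exact sequence 0 → X^a → M → Y^b → 0 such that Y is not a subrepresentation of M. Then every subrepresentation U of M with dim U = dim X + dim Y is indecomposable and fits in an exact sequence 0 → X → U → Y → 0. -/

import Mathlib

/-! Since `ω` is a source, replacing `U ω` by `0` leaves a subrepresentation `W ⊆ U` with
`dim W = dim X`. As `Ext¹(X, X) = 0`, the Euler form gives a nonzero `X → W`. Away from `ω`,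
`M` is `X^a`, so this map factors through `X^a`; its components are then endomorphisms of the
brick `X`, i.e. scalars, so it is injective and, by dimensions, `X ≅ W`. This is the sequence
`0 → X → U → S(ω) → 0`.

An endomorphism of `U` is a scalar on `W` and a scalar on the line `U ω`. If the two scalars
differed, a combination of it with the identity would project `U` onto `U ω`, so every arrow
out of `ω` would kill `U ω` and `S(ω)` would embed in `M`. Hence `End U = k`. -/

structure QRep (k : Type) [Field k] (V A : Type) (s t : A → V) where
  space : V → Type
  [addCommGroup : ∀ v, AddCommGroup (space v)]
  [module : ∀ v, Module k (space v)]
  map : ∀ a : A, space (s a) →ₗ[k] space (t a)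

attribute [instance] QRep.addCommGroup QRep.module

def NoCycle {V A : Type} (s t : A → V) : Prop :=
  ∀ (m : ℕ) (c : Fin (m + 1) → A),
    (∀ i : Fin m, t (c i.castSucc) = s (c i.succ)) → t (c (Fin.last m)) ≠ s (c 0)

def IsQHom (k : Type) [Field k] {V A : Type} {s t : A → V} (X Y : QRep k V A s t)
    (f : ∀ v, X.space v →ₗ[k] Y.space v) : Prop :=
  ∀ a : A, (f (t a)).comp (X.map a) = (Y.map a).comp (f (s a))

def QRep.pow (k : Type) [Field k] {V A : Type} {s t : A → V} (X : QRep k V A s t)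
    (n : ℕ) : QRep k V A s t where
  space v := Fin n → X.space v
  addCommGroup := fun _ => inferInstance
  module := fun _ => inferInstance
  map a := LinearMap.pi fun j => (X.map a).comp (LinearMap.proj j)

/-- Adjacency in the quiver avoiding the vertex ω. -/
def AdjAvoiding {V A : Type} (s t : A → V) (ω : V) (x y : V) : Prop :=
  x ≠ ω ∧ y ≠ ω ∧ ∃ a : A, (s a = x ∧ t a = y) ∨ (s a = y ∧ t a = x)

namespace QRep

variable {k : Type} [Field k] {V A : Type} {s t : A → V}

def sub (M : QRep k V A s t) (U : ∀ v, Submodule k (M.space v))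
    (hU : ∀ a, ∀ x ∈ U (s a), M.map a x ∈ U (t a)) : QRep k V A s t where
  space v := U v
  map a := (M.map a).restrict (hU a)

instance (M : QRep k V A s t) [∀ v, FiniteDimensional k (M.space v)]
    (U : ∀ v, Submodule k (M.space v)) (hU : ∀ a, ∀ x ∈ U (s a), M.map a x ∈ U (t a))
    (v : V) : FiniteDimensional k ((M.sub U hU).space v) :=
  inferInstanceAs (FiniteDimensional k (U v))

/-- The two-term complex of a pair of representations: its kernel is `Hom(P, N)` and its
cokernel is `Ext¹(P, N)`. -/
def homDiff (P N : QRep k V A s t) :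
    (∀ v, P.space v →ₗ[k] N.space v) →ₗ[k] (∀ a, P.space (s a) →ₗ[k] N.space (t a)) where
  toFun f a := f (t a) ∘ₗ P.map a - N.map a ∘ₗ f (s a)
  map_add' f g := by
    funext a
    simp only [Pi.add_apply, LinearMap.add_comp, LinearMap.comp_add]
    abel
  map_smul' c f := by
    funext a
    simp only [Pi.smul_apply, LinearMap.smul_comp, LinearMap.comp_smul, smul_sub,
      RingHom.id_apply]

theorem mem_ker_homDiff {P N : QRep k V A s t} {f : ∀ v, P.space v →ₗ[k] N.space v} :
    f ∈ LinearMap.ker (homDiff P N) ↔ IsQHom k P N f := by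
  simp only [LinearMap.mem_ker, homDiff, LinearMap.coe_mk, AddHom.coe_mk, funext_iff,
    Pi.zero_apply, sub_eq_zero]
  rfl

theorem isQHom_subtype (M : QRep k V A s t) (U : ∀ v, Submodule k (M.space v))
    (hU : ∀ a, ∀ x ∈ U (s a), M.map a x ∈ U (t a)) :
    IsQHom k (M.sub U hU) M fun v => (U v).subtype :=
  fun _ => rfl

theorem isQHom_inclusion (M : QRep k V A s t) {U U' : ∀ v, Submodule k (M.space v)}
    (hU : ∀ a, ∀ x ∈ U (s a), M.map a x ∈ U (t a))
    (hU' : ∀ a, ∀ x ∈ U' (s a), M.map a x ∈ U' (t a)) (h : U ≤ U') :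
    IsQHom k (M.sub U hU) (M.sub U' hU') fun v => Submodule.inclusion (h v) :=
  fun _ => rfl

theorem isQHom_proj (X : QRep k V A s t) {n : ℕ} (i : Fin n) :
    IsQHom k (X.pow k n) X fun _ => LinearMap.proj i :=
  fun _ => rfl

end QRep

section IsQHom

variable {k : Type} [Field k] {V A : Type} {s t : A → V}

theorem IsQHom.comp {P N R : QRep k V A s t} {g : ∀ v, N.space v →ₗ[k] R.space v}
    {f : ∀ v, P.space v →ₗ[k] N.space v} (hg : IsQHom k N R g) (hf : IsQHom k P N f) :
    IsQHom k P R fun v => g v ∘ₗ f v := fun a => by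
  rw [LinearMap.comp_assoc, hf a, ← LinearMap.comp_assoc, hg a, LinearMap.comp_assoc]

theorem IsQHom.exists_factor {X P N : QRep k V A s t} {ι : ∀ v, P.space v →ₗ[k] N.space v}
    {G : ∀ v, X.space v →ₗ[k] N.space v} (hι : IsQHom k P N ι)
    (hinj : ∀ v, Function.Injective (ι v)) (hG : IsQHom k X N G)
    (hrange : ∀ v, LinearMap.range (G v) ≤ LinearMap.range (ι v)) :
    ∃ F : ∀ v, X.space v →ₗ[k] P.space v, IsQHom k X P F ∧ ∀ v, ι v ∘ₗ F v = G v := by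
  let F v := (LinearEquiv.ofInjective (ι v) (hinj v)).symm.toLinearMap ∘ₗ
    (G v).codRestrict _ fun x => hrange v ⟨x, rfl⟩
  have hF : ∀ v, ι v ∘ₗ F v = G v := fun v => LinearMap.ext fun x => by
    simp [F]
  refine ⟨F, fun a => LinearMap.ext fun x => hinj _ ?_, hF⟩
  calc ι (t a) (F (t a) (X.map a x)) = G (t a) (X.map a x) := LinearMap.congr_fun (hF _) _
    _ = N.map a (G (s a) x) := LinearMap.congr_fun (hG a) x
    _ = N.map a (ι (s a) (F (s a) x)) := by rw [← hF (s a)]; rfl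
    _ = ι (t a) (P.map a (F (s a) x)) := (LinearMap.congr_fun (hι a) _).symm

/-- The components of `F` are endomorphisms of the brick `X`, hence scalars. -/
theorem IsQHom.injective_of_brick {X : QRep k V A s t}
    (hbrick : ∀ f, IsQHom k X X f → ∃ c : k, ∀ v, f v = c • LinearMap.id) {n : ℕ}
    {F : ∀ v, X.space v →ₗ[k] (X.pow k n).space v} (hF : IsQHom k X (X.pow k n) F)
    (hne : F ≠ 0) (v : V) : Function.Injective (F v) := by
  choose c hc using fun i : Fin n => hbrick _ ((X.isQHom_proj i).comp hF)
  have hFc : ∀ v x i, F v x i = c i • x := fun v x i => LinearMap.congr_fun (hc i v) x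
  obtain ⟨i, hi⟩ : ∃ i, c i ≠ 0 := by
    by_contra! h
    exact hne (funext fun v => LinearMap.ext fun x => funext fun i => by
      simp only [hFc, h, zero_smul]; rfl)
  rw [← LinearMap.ker_eq_bot, LinearMap.ker_eq_bot']
  intro x hx
  have hxi : c i • x = 0 := (hFc v x i).symm.trans (congrFun hx i)
  exact (smul_eq_zero.mp hxi).resolve_left hi

/-- Euler form argument: `dim Hom(X, N) - dim Ext¹(X, N)` depends only on dimension vectors,
so when `Ext¹(X, X) = 0` and `N` has the dimension vector of `X ≠ 0`,
`dim Hom(X, N) ≥ dim End(X) ≥ 1`. -/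
theorem exists_isQHom_ne_zero [Finite V] [Finite A] {X N : QRep k V A s t}
    [∀ v, FiniteDimensional k (X.space v)] [∀ v, FiniteDimensional k (N.space v)]
    (hext : Function.Surjective (QRep.homDiff X X))
    (hdim : ∀ v, Module.finrank k (N.space v) = Module.finrank k (X.space v))
    (hX : ∃ v, Nontrivial (X.space v)) :
    ∃ g : ∀ v, X.space v →ₗ[k] N.space v, IsQHom k X N g ∧ g ≠ 0 := by
  have := Fintype.ofFinite V
  have := Fintype.ofFinite A
  have hdimC₀ : Module.finrank k (∀ v, X.space v →ₗ[k] N.space v)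
      = Module.finrank k (∀ v, X.space v →ₗ[k] X.space v) := by
    simp only [Module.finrank_pi_fintype, Module.finrank_linearMap, hdim]
  have hdimC₁ : Module.finrank k (∀ a, X.space (s a) →ₗ[k] N.space (t a))
      = Module.finrank k (∀ a, X.space (s a) →ₗ[k] X.space (t a)) := by
    simp only [Module.finrank_pi_fintype, Module.finrank_linearMap, hdim]
  have hEnd : LinearMap.ker (QRep.homDiff X X) ≠ ⊥ := by
    obtain ⟨v, hv⟩ := hX
    refine (Submodule.ne_bot_iff _).mpr ⟨fun _ => LinearMap.id,
      QRep.mem_ker_homDiff.mpr fun _ => rfl, fun h => ?_⟩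
    obtain ⟨x, hx⟩ := exists_ne (0 : X.space v)
    exact hx (LinearMap.congr_fun (congrFun h v) x)
  have hXX := LinearMap.finrank_range_add_finrank_ker (QRep.homDiff X X)
  have hXN := LinearMap.finrank_range_add_finrank_ker (QRep.homDiff X N)
  have hrange := Submodule.finrank_le (LinearMap.range (QRep.homDiff X N))
  rw [LinearMap.range_eq_top.mpr hext, finrank_top] at hXX
  have hpos := Submodule.one_le_finrank_iff.mpr hEnd
  have hker : LinearMap.ker (QRep.homDiff X N) ≠ ⊥ := by
    rw [← Submodule.one_le_finrank_iff]
    omega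
  obtain ⟨g, hg, hne⟩ := (Submodule.ne_bot_iff _).mp hker
  exact ⟨g, QRep.mem_ker_homDiff.mp hg, hne⟩

theorem eq_zero_or_eq_id_of_eq_smul_id {N : QRep k V A s t} {v : V}
    (hv : Nontrivial (N.space v)) {e : ∀ v, N.space v →ₗ[k] N.space v} {c : k}
    (hc : ∀ v, e v = c • LinearMap.id) (hidem : e v ∘ₗ e v = e v) :
    (∀ v, e v = 0) ∨ ∀ v, e v = LinearMap.id := by
  obtain ⟨x, hx⟩ := exists_ne (0 : N.space v)
  have hcc : IsIdempotentElem c := by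
    have h := LinearMap.congr_fun hidem x
    simp only [hc v, LinearMap.comp_apply, LinearMap.smul_apply, LinearMap.id_apply,
      smul_smul] at h
    exact smul_left_injective k hx h
  rcases IsIdempotentElem.iff_eq_zero_or_one.mp hcc with rfl | rfl
  · exact Or.inl fun v => by rw [hc v, zero_smul]
  · exact Or.inr fun v => by rw [hc v, one_smul]

end IsQHom

section Source

variable {k : Type} [Field k] {V A : Type} {s t : A → V} {ω : V}
  {M : QRep k V A s t} {U : ∀ v, Submodule k (M.space v)}

theorem update_bot_mapsTo [DecidableEq V] (hsource : ∀ a, t a ≠ ω)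
    (hU : ∀ a, ∀ x ∈ U (s a), M.map a x ∈ U (t a)) (a : A) :
    ∀ x ∈ Function.update U ω ⊥ (s a), M.map a x ∈ Function.update U ω ⊥ (t a) := by
  intro x hx
  rw [Function.update_of_ne (hsource a)]
  have hle : Function.update U ω ⊥ ≤ U := update_le_self_iff.mpr bot_le
  exact hU a x (hle (s a) hx)

theorem range_le_range_of_surjective_off {X P N : QRep k V A s t}
    (hXω : Subsingleton (X.space ω)) {ι : ∀ v, P.space v →ₗ[k] N.space v}
    (hιsurj : ∀ v, v ≠ ω → Function.Surjective (ι v)) (G : ∀ v, X.space v →ₗ[k] N.space v)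
    (v : V) : LinearMap.range (G v) ≤ LinearMap.range (ι v) := by
  by_cases hv : v = ω
  · subst hv
    rw [LinearMap.range_eq_bot.mpr (Subsingleton.elim _ _)]
    exact bot_le
  · rw [LinearMap.range_eq_top.mpr (hιsurj v hv)]
    exact le_top

theorem map_eq_zero_of_isQHom_eq_id (hsource : ∀ a, t a ≠ ω) {N : QRep k V A s t}
    {E : ∀ v, N.space v →ₗ[k] N.space v} (hE : IsQHom k N N E)
    (hEω : E ω = LinearMap.id) (hE0 : ∀ v, v ≠ ω → E v = 0) {a : A} (ha : s a = ω) :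
    N.map a = 0 := by
  subst ha
  have h := hE a
  rwa [hEω, hE0 _ (hsource a), LinearMap.zero_comp, LinearMap.comp_id, eq_comm] at h

theorem exists_injective_isQHom_of_map_eq_zero (hsource : ∀ a, t a ≠ ω)
    {N : QRep k V A s t} [∀ v, FiniteDimensional k (N.space v)]
    {Y : QRep k V A s t} [∀ v, FiniteDimensional k (Y.space v)]
    (hY0 : ∀ v, v ≠ ω → Subsingleton (Y.space v))
    (hfin : Module.finrank k (N.space ω) = Module.finrank k (Y.space ω))
    (hzero : ∀ a, s a = ω → N.map a = 0) :
    ∃ g : ∀ v, Y.space v →ₗ[k] N.space v, IsQHom k Y N g ∧ ∀ v, Function.Injective (g v) := by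
  classical
  let g v : Y.space v →ₗ[k] N.space v := if h : v = ω then
    (LinearEquiv.ofFinrankEq (Y.space v) (N.space v) (by rw [h, hfin])).toLinearMap else 0
  refine ⟨g, fun a => ?_, fun v => ?_⟩
  · by_cases ha : s a = ω
    · rw [hzero a ha, LinearMap.zero_comp]
      simp only [g, dif_neg (hsource a), LinearMap.zero_comp]
    · have := hY0 _ ha
      exact LinearMap.ext fun y => by
        rw [Subsingleton.elim y 0]
        simp only [map_zero]
  · by_cases h : v = ω
    · simp only [g, dif_pos h, LinearEquiv.coe_coe]
      exact LinearEquiv.injective _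
    · have := hY0 v h
      exact Function.injective_of_subsingleton _

theorem exists_isQHom_ker_eq_range (hsource : ∀ a, t a ≠ ω)
    {N : QRep k V A s t} [∀ v, FiniteDimensional k (N.space v)]
    {Y : QRep k V A s t} [∀ v, FiniteDimensional k (Y.space v)]
    (hY0 : ∀ v, v ≠ ω → Subsingleton (Y.space v))
    (hfin : Module.finrank k (N.space ω) = Module.finrank k (Y.space ω))
    {X : QRep k V A s t} (hXω : Subsingleton (X.space ω)) {j : ∀ v, X.space v →ₗ[k] N.space v}
    (hjsurj : ∀ v, v ≠ ω → Function.Surjective (j v)) :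
    ∃ q : ∀ v, N.space v →ₗ[k] Y.space v, IsQHom k N Y q ∧
      (∀ v, Function.Surjective (q v)) ∧ ∀ v, LinearMap.ker (q v) = LinearMap.range (j v) := by
  classical
  let q v : N.space v →ₗ[k] Y.space v := if h : v = ω then
    (LinearEquiv.ofFinrankEq (N.space v) (Y.space v) (by rw [h, hfin])).toLinearMap else 0
  refine ⟨q, fun a => ?_, fun v => ?_, fun v => ?_⟩
  · have := hY0 _ (hsource a)
    exact Subsingleton.elim _ _
  · by_cases h : v = ω
    · simp only [q, dif_pos h, LinearEquiv.coe_coe]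
      exact LinearEquiv.surjective _
    · have := hY0 v h
      exact Function.surjective_to_subsingleton _
  · by_cases h : v = ω
    · subst h
      have : Subsingleton (X.space v) := hXω
      simp only [q, dif_pos, LinearEquiv.ker]
      exact (LinearMap.range_eq_bot.mpr (Subsingleton.elim _ _)).symm
    · simp only [q, dif_neg h, LinearMap.ker_zero]
      exact (LinearMap.range_eq_top.mpr (hjsurj v h)).symm

theorem exists_injective_isQHom_sub [Finite V] [Finite A] (hsource : ∀ a, t a ≠ ω)
    [∀ v, FiniteDimensional k (M.space v)] (hU : ∀ a, ∀ x ∈ U (s a), M.map a x ∈ U (t a))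
    {X : QRep k V A s t} [∀ v, FiniteDimensional k (X.space v)]
    (hXω : Subsingleton (X.space ω))
    (hbrick : ∀ f, IsQHom k X X f → ∃ c : k, ∀ v, f v = c • LinearMap.id)
    (hext : Function.Surjective (QRep.homDiff X X))
    (hfin : ∀ v, v ≠ ω → Module.finrank k (U v) = Module.finrank k (X.space v))
    {n : ℕ} {ι : ∀ v, (X.pow k n).space v →ₗ[k] M.space v} (hι : IsQHom k (X.pow k n) M ι)
    (hιinj : ∀ v, Function.Injective (ι v)) (hιsurj : ∀ v, v ≠ ω → Function.Surjective (ι v)) :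
    ∃ j : ∀ v, X.space v →ₗ[k] U v, IsQHom k X (M.sub U hU) j ∧
      ∀ v, Function.Injective (j v) := by
  classical
  by_cases hX : ∃ v, Nontrivial (X.space v)
  swap
  · refine ⟨0, fun a => LinearMap.ext fun _ => (map_zero ((M.sub U hU).map a)).symm, fun v => ?_⟩
    have := not_nontrivial_iff_subsingleton.mp (not_exists.mp hX v)
    exact Function.injective_of_subsingleton _
  have hle : Function.update U ω ⊥ ≤ U := update_le_self_iff.mpr bot_le
  let W := M.sub (Function.update U ω ⊥) (update_bot_mapsTo hsource hU)
  have hW : ∀ v, Module.finrank k (W.space v) = Module.finrank k (X.space v) := by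
    intro v
    by_cases hv : v = ω
    · subst hv
      show Module.finrank k (Function.update U v ⊥ v) = _
      rw [Function.update_self, finrank_bot, Module.finrank_zero_of_subsingleton]
    · show Module.finrank k (Function.update U ω ⊥ v) = _
      rw [Function.update_of_ne hv, hfin v hv]
  obtain ⟨g, hg, hgne⟩ := exists_isQHom_ne_zero hext hW hX
  let j v : X.space v →ₗ[k] U v := Submodule.inclusion (hle v) ∘ₗ g v
  have hj : IsQHom k X (M.sub U hU) j := (M.isQHom_inclusion _ hU hle).comp hg
  have hG := (M.isQHom_subtype U hU).comp hj
  obtain ⟨F, hF, hιF⟩ :=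
    hι.exists_factor hιinj hG (range_le_range_of_surjective_off hXω hιsurj _)
  have hFne : F ≠ 0 := by
    rintro rfl
    refine hgne (funext fun v => LinearMap.ext fun x => Subtype.ext ?_)
    have hx := LinearMap.congr_fun (hιF v) x
    simp only [Pi.zero_apply, LinearMap.comp_zero, LinearMap.zero_apply] at hx
    exact hx.symm
  refine ⟨j, hj, fun v => Function.Injective.of_comp (f := (U v).subtype) ?_⟩
  have hinj : Function.Injective (ι v ∘ₗ F v) :=
    (hιinj v).comp (hF.injective_of_brick hbrick hFne v)
  rwa [hιF v] at hinj

theorem exists_eq_smul_id_of_isQHom (hsource : ∀ a, t a ≠ ω)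
    {N : QRep k V A s t} [∀ v, FiniteDimensional k (N.space v)]
    (hNω : Module.finrank k (N.space ω) = 1) {ιN : ∀ v, N.space v →ₗ[k] M.space v}
    (hιN : IsQHom k N M ιN) (hιNinj : ∀ v, Function.Injective (ιN v))
    {Y : QRep k V A s t} [∀ v, FiniteDimensional k (Y.space v)]
    (hY0 : ∀ v, v ≠ ω → Subsingleton (Y.space v)) (hY1 : Module.finrank k (Y.space ω) = 1)
    (hred : ¬ ∃ g : ∀ v, Y.space v →ₗ[k] M.space v,
      IsQHom k Y M g ∧ ∀ v, Function.Injective (g v))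
    {X : QRep k V A s t} (hXω : Subsingleton (X.space ω))
    (hbrick : ∀ f, IsQHom k X X f → ∃ c : k, ∀ v, f v = c • LinearMap.id)
    {j : ∀ v, X.space v →ₗ[k] N.space v} (hj : IsQHom k X N j)
    (hjinj : ∀ v, Function.Injective (j v)) (hjsurj : ∀ v, v ≠ ω → Function.Surjective (j v))
    {e : ∀ v, N.space v →ₗ[k] N.space v} (he : IsQHom k N N e) :
    ∃ c : k, ∀ v, e v = c • LinearMap.id := by
  obtain ⟨cω, hcω, -⟩ := LinearMap.existsUnique_eq_smul_id_of_finrank_eq_one hNω (e ω)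
  obtain ⟨f, hf, hjf⟩ :=
    hj.exists_factor hjinj (he.comp hj) (range_le_range_of_surjective_off hXω hjsurj _)
  obtain ⟨c, hc⟩ := hbrick f hf
  have hoff : ∀ v, v ≠ ω → e v = c • LinearMap.id := by
    intro v hv
    refine LinearMap.ext fun u => ?_
    obtain ⟨x, rfl⟩ := hjsurj v hv u
    have hx := LinearMap.congr_fun (hjf v) x
    simp only [LinearMap.comp_apply, hc v, LinearMap.smul_apply, LinearMap.id_apply,
      map_smul] at hx
    simp only [← hx, LinearMap.smul_apply, LinearMap.id_apply]
  by_cases hcc : c = cω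
  · refine ⟨cω, fun v => ?_⟩
    by_cases hv : v = ω
    · subst hv
      exact hcω
    · rw [hoff v hv, hcc]
  exfalso
  let idN : ∀ v, N.space v →ₗ[k] N.space v := fun _ => LinearMap.id
  let E := (cω - c)⁻¹ • (e - c • idN)
  have hE : IsQHom k N N E := QRep.mem_ker_homDiff.mp <|
    Submodule.smul_mem _ _ <| Submodule.sub_mem _ (QRep.mem_ker_homDiff.mpr he) <|
      Submodule.smul_mem _ _ <| QRep.mem_ker_homDiff.mpr fun _ => rfl
  have hEω : E ω = LinearMap.id := by
    simp only [E, idN, Pi.smul_apply, Pi.sub_apply, hcω, ← sub_smul, smul_smul,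
      inv_mul_cancel₀ (sub_ne_zero.mpr (Ne.symm hcc)), one_smul]
  have hE0 : ∀ v, v ≠ ω → E v = 0 := by
    intro v hv
    simp only [E, idN, Pi.smul_apply, Pi.sub_apply, hoff v hv, sub_self, smul_zero]
  obtain ⟨g, hg, hginj⟩ := exists_injective_isQHom_of_map_eq_zero hsource hY0
    (hNω.trans hY1.symm) fun a => map_eq_zero_of_isQHom_eq_id hsource hE hEω hE0
  exact hred ⟨fun v => ιN v ∘ₗ g v, hιN.comp hg, fun v => (hιNinj v).comp (hginj v)⟩

end Source

theorem stmt14_general (k : Type) [Field k] {V A : Type} [Finite V] [Finite A]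
    (s t : A → V) (ω : V) (hsource : ∀ a : A, t a ≠ ω)
    -- X: an exceptional representation of Q' extended by 0 at ω
    (X : QRep k V A s t) [∀ v, FiniteDimensional k (X.space v)]
    (hXω : Subsingleton (X.space ω))
    (hbrick : ∀ f, IsQHom k X X f → ∃ c : k, ∀ v, f v = c • LinearMap.id)
    (hext : ∀ h : ∀ a : A, X.space (s a) →ₗ[k] X.space (t a),
      ∃ f : ∀ v, X.space v →ₗ[k] X.space v,
        ∀ a, h a = ((f (t a)).comp (X.map a)) - ((X.map a).comp (f (s a))))
    -- Y = S(ω)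
    (Y : QRep k V A s t) [∀ v, FiniteDimensional k (Y.space v)]
    (hY0 : ∀ v, v ≠ ω → Subsingleton (Y.space v))
    (hY1 : Module.finrank k (Y.space ω) = 1)
    -- M with an exact sequence 0 → X^a → M → Y^b → 0
    (M : QRep k V A s t) [∀ v, FiniteDimensional k (M.space v)]
    (a b : ℕ)
    (ι : ∀ v, (QRep.pow k X a).space v →ₗ[k] M.space v)
    (hι : IsQHom k (QRep.pow k X a) M ι) (hιinj : ∀ v, Function.Injective (ι v))
    (π : ∀ v, M.space v →ₗ[k] (QRep.pow k Y b).space v)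
    (hexact : ∀ v, LinearMap.ker (π v) = LinearMap.range (ι v))
    -- Y is not (isomorphic to) a subrepresentation of M
    (hred : ¬ ∃ g : ∀ v, Y.space v →ₗ[k] M.space v,
      IsQHom k Y M g ∧ ∀ v, Function.Injective (g v))
    -- U ≤ M with dim U = dim X + dim Y
    (U : ∀ v, Submodule k (M.space v))
    (hU : ∀ a' : A, ∀ x ∈ U (s a'), M.map a' x ∈ U (t a'))
    (hdim : ∀ v, Module.finrank k (U v)
      = Module.finrank k (X.space v) + Module.finrank k (Y.space v)) :
    -- U is indecomposable: every idempotent endomorphism of U is 0 or the identity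
    (∀ e : ∀ v, U v →ₗ[k] U v,
      (∀ a' : A, (e (t a')).comp ((M.map a').restrict (hU a')) =
        ((M.map a').restrict (hU a')).comp (e (s a'))) →
      (∀ v, (e v).comp (e v) = e v) →
      (∀ v, e v = 0) ∨ (∀ v, e v = LinearMap.id)) ∧
    -- U fits in an exact sequence 0 → X → U → Y → 0
    (∃ (j : ∀ v, X.space v →ₗ[k] U v) (q : ∀ v, U v →ₗ[k] Y.space v),
      (∀ a' : A, (j (t a')).comp (X.map a') =
        ((M.map a').restrict (hU a')).comp (j (s a'))) ∧
      (∀ a' : A, (q (t a')).comp ((M.map a').restrict (hU a')) =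
        (Y.map a').comp (q (s a'))) ∧
      (∀ v, Function.Injective (j v)) ∧ (∀ v, Function.Surjective (q v)) ∧
      (∀ v, LinearMap.ker (q v) = LinearMap.range (j v))) := by
  have hιsurj : ∀ v, v ≠ ω → Function.Surjective (ι v) := by
    intro v hv
    have := hY0 v hv
    have : Subsingleton ((QRep.pow k Y b).space v) :=
      inferInstanceAs (Subsingleton (Fin b → Y.space v))
    rw [← LinearMap.range_eq_top, ← hexact v, LinearMap.ker_eq_top]
    exact LinearMap.ext fun _ => Subsingleton.elim _ _
  have hfin : ∀ v, v ≠ ω → Module.finrank k (U v) = Module.finrank k (X.space v) := by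
    intro v hv
    have := hY0 v hv
    rw [hdim v, Module.finrank_zero_of_subsingleton (M := Y.space v), add_zero]
  have hUω : Module.finrank k (U ω) = Module.finrank k (Y.space ω) := by
    rw [hdim ω, Module.finrank_zero_of_subsingleton (M := X.space ω), zero_add]
  have hNω : Module.finrank k ((M.sub U hU).space ω) = 1 := hUω.trans hY1
  obtain ⟨j, hj, hjinj⟩ := exists_injective_isQHom_sub hsource hU hXω hbrick
    (fun h => (hext h).imp fun f hf => funext fun a => (hf a).symm) hfin hι hιinj hιsurj
  have hjsurj : ∀ v, v ≠ ω → Function.Surjective (j v) := fun v hv =>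
    (LinearMap.injective_iff_surjective_of_finrank_eq_finrank (hfin v hv).symm).mp (hjinj v)
  obtain ⟨q, hq, hqsurj, hqj⟩ :=
    exists_isQHom_ker_eq_range (N := M.sub U hU) hsource hY0 hUω hXω hjsurj
  refine ⟨fun e he hidem => ?_, j, q, hj, hq, hjinj, hqsurj, hqj⟩
  obtain ⟨c, hc⟩ := exists_eq_smul_id_of_isQHom hsource hNω (M.isQHom_subtype U hU)
    (fun _ => Subtype.val_injective) hY0 hY1 hred hXω hbrick hj hjinj hjsurj he
  exact eq_zero_or_eq_id_of_eq_smul_id (Module.nontrivial_of_finrank_eq_succ hNω) hc (hidem ω)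

theorem stmt14 (k : Type) [Field k] {V A : Type} [Finite V] [Finite A]
    (s t : A → V) (hacyclic : NoCycle s t)
    (ω p : V) (hsource : ∀ a : A, t a ≠ ω)
    (a₀ : A) (ha₀s : s a₀ = ω) (ha₀t : t a₀ = p)
    -- Q' = Q \ {ω} is connected
    (hconn : ∀ x y : V, x ≠ ω → y ≠ ω →
      Relation.ReflTransGen (AdjAvoiding s t ω) x y)
    -- X: an exceptional representation of Q' extended by 0 at ω
    (X : QRep k V A s t) [∀ v, FiniteDimensional k (X.space v)]
    (hXω : Subsingleton (X.space ω))
    (hbrick : ∀ f, IsQHom k X X f → ∃ c : k, ∀ v, f v = c • LinearMap.id)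
    (hext : ∀ h : ∀ a : A, X.space (s a) →ₗ[k] X.space (t a),
      ∃ f : ∀ v, X.space v →ₗ[k] X.space v,
        ∀ a, h a = ((f (t a)).comp (X.map a)) - ((X.map a).comp (f (s a))))
    -- Y = S(ω)
    (Y : QRep k V A s t) [∀ v, FiniteDimensional k (Y.space v)]
    (hY0 : ∀ v, v ≠ ω → Subsingleton (Y.space v))
    (hY1 : Module.finrank k (Y.space ω) = 1)
    -- M with an exact sequence 0 → X^a → M → Y^b → 0
    (M : QRep k V A s t) [∀ v, FiniteDimensional k (M.space v)]
    (a b : ℕ)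
    (ι : ∀ v, (QRep.pow k X a).space v →ₗ[k] M.space v)
    (hι : IsQHom k (QRep.pow k X a) M ι) (hιinj : ∀ v, Function.Injective (ι v))
    (π : ∀ v, M.space v →ₗ[k] (QRep.pow k Y b).space v)
    (hπ : IsQHom k M (QRep.pow k Y b) π) (hπsurj : ∀ v, Function.Surjective (π v))
    (hexact : ∀ v, LinearMap.ker (π v) = LinearMap.range (ι v))
    -- Y is not (isomorphic to) a subrepresentation of M
    (hred : ¬ ∃ g : ∀ v, Y.space v →ₗ[k] M.space v,
      IsQHom k Y M g ∧ ∀ v, Function.Injective (g v))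
    -- U ≤ M with dim U = dim X + dim Y
    (U : ∀ v, Submodule k (M.space v))
    (hU : ∀ a' : A, ∀ x ∈ U (s a'), M.map a' x ∈ U (t a'))
    (hdim : ∀ v, Module.finrank k (U v)
      = Module.finrank k (X.space v) + Module.finrank k (Y.space v)) :
    -- U is indecomposable: every idempotent endomorphism of U is 0 or the identity
    (∀ e : ∀ v, U v →ₗ[k] U v,
      (∀ a' : A, (e (t a')).comp ((M.map a').restrict (hU a')) =
        ((M.map a').restrict (hU a')).comp (e (s a'))) →
      (∀ v, (e v).comp (e v) = e v) →
      (∀ v, e v = 0) ∨ (∀ v, e v = LinearMap.id)) ∧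
    -- U fits in an exact sequence 0 → X → U → Y → 0
    (∃ (j : ∀ v, X.space v →ₗ[k] U v) (q : ∀ v, U v →ₗ[k] Y.space v),
      (∀ a' : A, (j (t a')).comp (X.map a') =
        ((M.map a').restrict (hU a')).comp (j (s a'))) ∧
      (∀ a' : A, (q (t a')).comp ((M.map a').restrict (hU a')) =
        (Y.map a').comp (q (s a'))) ∧
      (∀ v, Function.Injective (j v)) ∧ (∀ v, Function.Surjective (q v)) ∧
      (∀ v, LinearMap.ker (q v) = LinearMap.range (j v))) :=
  stmt14_general k s t ω hsource X hXω hbrick hext Y hY0 hY1 M a b ι hι hιinj π hexact hred U hU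
    hdim
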